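/- Let R be a unital 2- and 3-torsion free alternative ring with a nontrivial idempotent e_1, e_2 = 1 − e_1, satisfying: for each i ∈ {1,2}, if x ∈ R has (x r)e_i = 0 for all r ∈ R, then x = 0. Let φ : R → R be an additive commuting map. Then for all i ≠ j in {1,2}, every x_ij ∈ R_ij and every x_ji ∈ R_ji: [e_1 φ(x_ij) e_1 + e_2 φ(x_ij) e_2, x_ji] = 0. -/

import Mathlib

/-- The pair of Peirce idempotents associated to an idempotent `e`:
`peirceE e 0 = e₁ = e` and `peirceE e 1 = e₂ = 1 - e`. -/
def peirceE {R : Type*} [NonAssocRing R] (e : R) (i : Fin 2) : R :=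
  if i = 0 then e else 1 - e

/-- The Peirce component `R_ij = eᵢ R eⱼ` of a unital alternative ring relative
to the idempotent `e` (indices `0, 1` standing for `1, 2`). -/
def peirceSet {R : Type*} [NonAssocRing R] (e : R) (i j : Fin 2) : Set R :=
  {x : R | ∃ a : R, x = peirceE e i * (a * peirceE e j)}

/-!
Write `a = a₁₁ + a₁₂ + a₂₁ + a₂₂` for the Peirce decomposition relative to `e = e₁`.
If `e` acts on `x` by scalars `(l, r)` from the left and right and on `y` by `(l', r')`, the
linearized alternative laws show that it acts on `xy` by `(l + r - l', l' + r' - r)`; a scalar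
`c ∉ {0, 1}` forces `(c² - c) z = 0` because `e (e z) = e z`. This yields the Peirce
multiplication table at once.

Let `x ∈ R₁₂` and `y ∈ R₂₁`. Linearizing `[φ z, z] = 0` at `(e, y)` and projecting onto `R₁₂`
gives `φ(y)₁₂ = 0`, since `φ(e)` commutes with `e` and so has no `R₂₁` part. Linearizing at
`(x, y)` and projecting onto `R₂₁` then gives `φ(x)₂₂ y = y φ(x)₁₁`, which is the claim because
`φ(x)₁₁ y = 0 = y φ(x)₂₂`. The case `x ∈ R₂₁` is the case `x ∈ R₁₂` for the idempotent `1 - e`.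
-/

class IsAlternative (R : Type*) [Mul R] : Prop where
  mul_self_mul : ∀ x y : R, x * x * y = x * (x * y)
  mul_mul_self : ∀ x y : R, y * x * x = y * (x * x)

namespace IsAlternative

variable {R : Type*} [NonAssocRing R] [IsAlternative R]

theorem left_polarized (a b c : R) : a * b * c + b * a * c = a * (b * c) + b * (a * c) := by
  have h := mul_self_mul (a + b) c
  simp only [add_mul, mul_add, mul_self_mul a c, mul_self_mul b c] at h
  linear_combination (norm := abel1) h

theorem right_polarized (a b c : R) : a * b * c + a * c * b = a * (b * c) + a * (c * b) := by
  have h := mul_mul_self (b + c) a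
  simp only [add_mul, mul_add, mul_mul_self b a, mul_mul_self c a] at h
  linear_combination (norm := abel1) h

variable {e : R} (he : IsIdempotentElem e)
include he

theorem idem_mul_idem_mul (a : R) : e * (e * a) = e * a := by
  rw [← mul_self_mul, he.eq]

theorem mul_idem_mul_idem (a : R) : a * e * e = a * e := by
  rw [mul_mul_self, he.eq]

theorem idem_mul_mul_idem (a : R) : e * a * e = e * (a * e) := by
  have h := right_polarized e a e
  rw [← mul_self_mul, he.eq] at h
  linear_combination (norm := abel1) h

end IsAlternative

open IsAlternative

/-- `e` acts on `x` by the scalar `l` from the left and `r` from the right. The Peirce spaces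
`R_ij` are the cases `l, r ∈ {0, 1}`; allowing all integers lets `IsPeirce.mul` compute every
product of Peirce elements by one formula. -/
def IsPeirce {R : Type*} [NonAssocRing R] (e : R) (l r : ℤ) (x : R) : Prop :=
  e * x = l • x ∧ x * e = r • x

section Peirce

variable {R : Type*} [NonAssocRing R]

-- `e a e`, `e a (1 - e)`, `(1 - e) a e` and `(1 - e) a (1 - e)`, written without `1 - e`
def peirce11 (e a : R) : R := e * (a * e)
def peirce12 (e a : R) : R := e * a - e * (a * e)
def peirce21 (e a : R) : R := a * e - e * (a * e)
def peirce22 (e a : R) : R := a - e * a - a * e + e * (a * e)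

theorem peirce_decomposition (e a : R) :
    a = peirce11 e a + peirce12 e a + peirce21 e a + peirce22 e a := by
  simp only [peirce11, peirce12, peirce21, peirce22]; abel

theorem peirce12_add (e a b : R) : peirce12 e (a + b) = peirce12 e a + peirce12 e b := by
  simp only [peirce12, mul_add, add_mul]; abel

theorem peirce21_add (e a b : R) : peirce21 e (a + b) = peirce21 e a + peirce21 e b := by
  simp only [peirce21, mul_add, add_mul]; abel

theorem IsPeirce.peirce12_eq {e : R} {l r : ℤ} {z : R} (h : IsPeirce e l r z) :
    peirce12 e z = (l * (1 - r)) • z := by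
  rw [peirce12, h.1, h.2, mul_smul_comm, h.1, smul_smul, mul_comm r, mul_sub, mul_one, sub_smul]

theorem IsPeirce.peirce21_eq {e : R} {l r : ℤ} {z : R} (h : IsPeirce e l r z) :
    peirce21 e z = (r * (1 - l)) • z := by
  rw [peirce21, h.2, mul_smul_comm, h.1, smul_smul, mul_sub, mul_one, sub_smul, mul_comm]

variable [IsAlternative R]

theorem IsPeirce.mul {e : R} {l r l' r' : ℤ} {x y : R} (hx : IsPeirce e l r x)
    (hy : IsPeirce e l' r' y) : IsPeirce e (l + r - l') (l' + r' - r) (x * y) := by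
  constructor
  · have h := left_polarized e x y
    rw [hx.1, hx.2, hy.1, smul_mul_assoc, smul_mul_assoc, mul_smul_comm] at h
    rw [sub_smul, add_smul]
    linear_combination (norm := abel1) -h
  · have h := right_polarized x e y
    rw [hx.2, hy.1, hy.2, smul_mul_assoc, mul_smul_comm, mul_smul_comm] at h
    rw [sub_smul, add_smul]
    linear_combination (norm := abel1) h

variable {e : R} (he : IsIdempotentElem e)
include he

theorem IsPeirce.smul_left_eq_zero {l r : ℤ} {z : R} (h : IsPeirce e l r z) :
    (l * (l - 1)) • z = 0 := by
  have h' := idem_mul_idem_mul he z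
  rw [h.1, mul_smul_comm, h.1, smul_smul] at h'
  rw [mul_sub, mul_one, sub_smul, h', sub_self]

theorem IsPeirce.smul_right_eq_zero {l r : ℤ} {z : R} (h : IsPeirce e l r z) :
    (r * (r - 1)) • z = 0 := by
  have h' := mul_idem_mul_idem he z
  rw [h.2, smul_mul_assoc, h.2, smul_smul] at h'
  rw [mul_sub, mul_one, sub_smul, h', sub_self]

theorem isPeirce_peirce11 (a : R) : IsPeirce e 1 1 (peirce11 e a) := by
  simp only [IsPeirce, peirce11, one_smul, idem_mul_idem_mul he, idem_mul_mul_idem he,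
    mul_idem_mul_idem he, and_self]

theorem isPeirce_peirce12 (a : R) : IsPeirce e 1 0 (peirce12 e a) := by
  simp only [IsPeirce, peirce12, one_smul, zero_smul, mul_sub, sub_mul, idem_mul_idem_mul he,
    idem_mul_mul_idem he, mul_idem_mul_idem he, sub_self, and_self]

theorem isPeirce_peirce21 (a : R) : IsPeirce e 0 1 (peirce21 e a) := by
  simp only [IsPeirce, peirce21, one_smul, zero_smul, mul_sub, sub_mul, idem_mul_idem_mul he,
    idem_mul_mul_idem he, mul_idem_mul_idem he, sub_self, and_self]

theorem isPeirce_peirce22 (a : R) : IsPeirce e 0 0 (peirce22 e a) := by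
  simp only [IsPeirce, peirce22, zero_smul, mul_add, mul_sub, add_mul, sub_mul,
    idem_mul_idem_mul he, idem_mul_mul_idem he, mul_idem_mul_idem he]
  constructor <;> abel

theorem IsPeirce.eq_zero_of_left_eq_two (tor2 : ∀ x : R, (2 : ℕ) • x = 0 → x = 0) {r : ℤ}
    {z : R} (h : IsPeirce e 2 r z) : z = 0 :=
  tor2 z (by simpa using h.smul_left_eq_zero he)

theorem IsPeirce.eq_zero_of_right_eq_neg_one (tor2 : ∀ x : R, (2 : ℕ) • x = 0 → x = 0) {l : ℤ}
    {z : R} (h : IsPeirce e l (-1) z) : z = 0 :=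
  tor2 z (by simpa using h.smul_right_eq_zero he)

theorem peirce21_mul_eq_peirce22_mul {y : R} (hy : IsPeirce e 0 1 y) (p : R) :
    peirce21 e (p * y) = peirce22 e p * y := by
  conv_lhs => rw [peirce_decomposition e p]
  simp only [add_mul, peirce21_add, ((isPeirce_peirce11 he p).mul hy).peirce21_eq,
    ((isPeirce_peirce12 he p).mul hy).peirce21_eq, ((isPeirce_peirce21 he p).mul hy).peirce21_eq,
    ((isPeirce_peirce22 he p).mul hy).peirce21_eq]
  norm_num

theorem peirce21_mul_eq_mul_peirce11 {y : R} (hy : IsPeirce e 0 1 y) (p : R) :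
    peirce21 e (y * p) = y * peirce11 e p := by
  conv_lhs => rw [peirce_decomposition e p]
  simp only [mul_add, peirce21_add, (hy.mul (isPeirce_peirce11 he p)).peirce21_eq,
    (hy.mul (isPeirce_peirce12 he p)).peirce21_eq, (hy.mul (isPeirce_peirce21 he p)).peirce21_eq,
    (hy.mul (isPeirce_peirce22 he p)).peirce21_eq]
  norm_num

theorem peirce21_mul_eq_mul_peirce12 {x : R} (hx : IsPeirce e 1 0 x) (q : R) :
    peirce21 e (x * q) = x * peirce12 e q := by
  have h11 := (hx.mul (isPeirce_peirce11 he q)).smul_right_eq_zero he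
  norm_num at h11
  conv_lhs => rw [peirce_decomposition e q]
  simp only [mul_add, peirce21_add, (hx.mul (isPeirce_peirce11 he q)).peirce21_eq,
    (hx.mul (isPeirce_peirce12 he q)).peirce21_eq, (hx.mul (isPeirce_peirce21 he q)).peirce21_eq,
    (hx.mul (isPeirce_peirce22 he q)).peirce21_eq]
  norm_num [h11]

theorem peirce21_mul_eq_peirce12_mul {x : R} (hx : IsPeirce e 1 0 x) (q : R) :
    peirce21 e (q * x) = peirce12 e q * x := by
  have h22 := ((isPeirce_peirce22 he q).mul hx).smul_left_eq_zero he
  norm_num at h22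
  conv_lhs => rw [peirce_decomposition e q]
  simp only [add_mul, peirce21_add, ((isPeirce_peirce11 he q).mul hx).peirce21_eq,
    ((isPeirce_peirce12 he q).mul hx).peirce21_eq, ((isPeirce_peirce21 he q).mul hx).peirce21_eq,
    ((isPeirce_peirce22 he q).mul hx).peirce21_eq]
  norm_num [h22]

theorem peirce12_mul_eq_peirce21_mul {y : R} (hy : IsPeirce e 0 1 y) (p : R) :
    peirce12 e (p * y) = peirce21 e p * y := by
  have h11 := ((isPeirce_peirce11 he p).mul hy).smul_left_eq_zero he
  norm_num at h11
  conv_lhs => rw [peirce_decomposition e p]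
  simp only [add_mul, peirce12_add, ((isPeirce_peirce11 he p).mul hy).peirce12_eq,
    ((isPeirce_peirce12 he p).mul hy).peirce12_eq, ((isPeirce_peirce21 he p).mul hy).peirce12_eq,
    ((isPeirce_peirce22 he p).mul hy).peirce12_eq]
  norm_num [h11]

theorem peirce12_mul_eq_mul_peirce21 {y : R} (hy : IsPeirce e 0 1 y) (p : R) :
    peirce12 e (y * p) = y * peirce21 e p := by
  have h22 := (hy.mul (isPeirce_peirce22 he p)).smul_right_eq_zero he
  norm_num at h22
  conv_lhs => rw [peirce_decomposition e p]
  simp only [mul_add, peirce12_add, (hy.mul (isPeirce_peirce11 he p)).peirce12_eq,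
    (hy.mul (isPeirce_peirce12 he p)).peirce12_eq, (hy.mul (isPeirce_peirce21 he p)).peirce12_eq,
    (hy.mul (isPeirce_peirce22 he p)).peirce12_eq]
  norm_num [h22]

theorem peirce12_mul_idem (b : R) : peirce12 e (b * e) = 0 := by
  rw [peirce12, mul_idem_mul_idem he, sub_self]

theorem peirce12_idem_mul (b : R) : peirce12 e (e * b) = peirce12 e b := by
  rw [peirce12, peirce12, idem_mul_idem_mul he, idem_mul_mul_idem he, idem_mul_idem_mul he]

theorem peirce21_eq_zero_of_commute {d : R} (hd : e * d = d * e) : peirce21 e d = 0 := by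
  rw [peirce21, ← hd, idem_mul_idem_mul he, sub_self]

end Peirce

section OneSub

variable {R : Type*} [NonAssocRing R] (e a : R)

theorem peirce11_one_sub : peirce11 (1 - e) a = peirce22 e a := by
  simp only [peirce11, peirce22, mul_sub, sub_mul, mul_one, one_mul]; abel

theorem peirce12_one_sub : peirce12 (1 - e) a = peirce21 e a := by
  simp only [peirce12, peirce21, mul_sub, sub_mul, mul_one, one_mul]; abel

theorem peirce21_one_sub : peirce21 (1 - e) a = peirce12 e a := by
  simp only [peirce12, peirce21, mul_sub, sub_mul, mul_one, one_mul]; abel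

theorem peirce22_one_sub : peirce22 (1 - e) a = peirce11 e a := by
  simpa only [sub_sub_cancel] using (peirce11_one_sub (1 - e) a).symm

theorem one_sub_mul_mul_one_sub : (1 - e) * (a * (1 - e)) = peirce22 e a := by
  simpa only [peirce11] using peirce11_one_sub e a

theorem peirceSet_zero_one : peirceSet e 0 1 = Set.range (peirce12 e) := by
  ext x
  refine exists_congr fun a => ?_
  simp [peirceE, peirce12, mul_sub, eq_comm]

theorem peirceSet_one_zero : peirceSet e 1 0 = Set.range (peirce21 e) := by
  ext x
  refine exists_congr fun a => ?_
  simp [peirceE, peirce21, sub_mul, eq_comm]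

end OneSub

theorem commuting_map_polarized {R : Type*} [NonAssocRing R] {φ : R → R}
    (hadd : ∀ x y : R, φ (x + y) = φ x + φ y) (hcomm : ∀ x : R, φ x * x = x * φ x) (p q : R) :
    φ p * q + φ q * p = p * φ q + q * φ p := by
  have h := hcomm (p + q)
  simp only [hadd, add_mul, mul_add, hcomm p, hcomm q] at h
  linear_combination (norm := abel1) h

theorem commute_peirce11_add_peirce22 {R : Type*} [NonAssocRing R] [IsAlternative R]
    (tor2 : ∀ x : R, (2 : ℕ) • x = 0 → x = 0) {e : R} (he : IsIdempotentElem e) {φ : R → R}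
    (hadd : ∀ x y : R, φ (x + y) = φ x + φ y) (hcomm : ∀ x : R, φ x * x = x * φ x) {x y : R}
    (hx : IsPeirce e 1 0 x) (hy : IsPeirce e 0 1 y) :
    Commute (peirce11 e (φ x) + peirce22 e (φ x)) y := by
  have hd : peirce21 e (φ e) = 0 := peirce21_eq_zero_of_commute he (hcomm e).symm
  have hb : peirce12 e (φ y) = 0 := by
    have h := congrArg (peirce12 e) (commuting_map_polarized hadd hcomm e y)
    rw [peirce12_add, peirce12_add, peirce12_mul_eq_peirce21_mul he hy,
      peirce12_mul_eq_mul_peirce21 he hy, peirce12_mul_idem he, peirce12_idem_mul he, hd,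
      zero_mul, mul_zero] at h
    simpa only [add_zero] using h.symm
  have hxy : peirce22 e (φ x) * y = y * peirce11 e (φ x) := by
    have h := congrArg (peirce21 e) (commuting_map_polarized hadd hcomm x y)
    rw [peirce21_add, peirce21_add, peirce21_mul_eq_peirce22_mul he hy,
      peirce21_mul_eq_mul_peirce11 he hy, peirce21_mul_eq_peirce12_mul he hx,
      peirce21_mul_eq_mul_peirce12 he hx, hb, zero_mul, mul_zero, add_zero, zero_add] at h
    exact h
  have h11 : peirce11 e (φ x) * y = 0 :=
    ((isPeirce_peirce11 he _).mul hy).eq_zero_of_left_eq_two he tor2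
  have h22 : y * peirce22 e (φ x) = 0 :=
    (hy.mul (isPeirce_peirce22 he _)).eq_zero_of_right_eq_neg_one he tor2
  rw [Commute, SemiconjBy, add_mul, mul_add, h11, h22, hxy, zero_add, add_zero]

theorem stmt15_general {R : Type*} [NonAssocRing R]
    (alt1 : ∀ x y : R, x * x * y = x * (x * y))
    (alt2 : ∀ x y : R, y * x * x = y * (x * x))
    (tor2 : ∀ x : R, (2 : ℕ) • x = 0 → x = 0)
    (e₁ : R) (he : e₁ * e₁ = e₁)
    (φ : R → R) (hadd : ∀ x y : R, φ (x + y) = φ x + φ y)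
    (hcomm : ∀ x : R, φ x * x = x * φ x)
    :
    ∀ i j : Fin 2, i ≠ j → ∀ x ∈ peirceSet e₁ i j, ∀ y ∈ peirceSet e₁ j i,
      (e₁ * (φ x * e₁) + (1 - e₁) * (φ x * (1 - e₁))) * y =
        y * (e₁ * (φ x * e₁) + (1 - e₁) * (φ x * (1 - e₁)))
    := by
  have : IsAlternative R := ⟨alt1, alt2⟩
  have he : IsIdempotentElem e₁ := he
  intro i j hij x hx y hy
  rw [one_sub_mul_mul_one_sub]
  obtain ⟨rfl, rfl⟩ | ⟨rfl, rfl⟩ : (i = 0 ∧ j = 1) ∨ (i = 1 ∧ j = 0) := by omega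
  · rw [peirceSet_zero_one] at hx
    rw [peirceSet_one_zero] at hy
    obtain ⟨u, rfl⟩ := hx
    obtain ⟨c, rfl⟩ := hy
    exact commute_peirce11_add_peirce22 tor2 he hadd hcomm (isPeirce_peirce12 he u)
      (isPeirce_peirce21 he c)
  · rw [peirceSet_one_zero] at hx
    rw [peirceSet_zero_one] at hy
    obtain ⟨u, rfl⟩ := hx
    obtain ⟨c, rfl⟩ := hy
    have h := commute_peirce11_add_peirce22 tor2 he.one_sub hadd hcomm
      (isPeirce_peirce12 he.one_sub u) (isPeirce_peirce21 he.one_sub c)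
    rw [peirce12_one_sub, peirce21_one_sub, peirce11_one_sub, peirce22_one_sub, add_comm] at h
    exact h

theorem stmt15 {R : Type*} [NonAssocRing R]
    (alt1 : ∀ x y : R, x * x * y = x * (x * y))
    (alt2 : ∀ x y : R, y * x * x = y * (x * x))
    (tor2 : ∀ x : R, (2 : ℕ) • x = 0 → x = 0)
    (tor3 : ∀ x : R, (3 : ℕ) • x = 0 → x = 0)
    (e₁ : R) (he : e₁ * e₁ = e₁) (he0 : e₁ ≠ 0) (he1 : e₁ ≠ 1)
    (hd1 : ∀ x : R, (∀ r : R, x * r * e₁ = 0) → x = 0)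
    (hd2 : ∀ x : R, (∀ r : R, x * r * (1 - e₁) = 0) → x = 0)
    (φ : R → R) (hadd : ∀ x y : R, φ (x + y) = φ x + φ y)
    (hcomm : ∀ x : R, φ x * x = x * φ x)
    :
    ∀ i j : Fin 2, i ≠ j → ∀ x ∈ peirceSet e₁ i j, ∀ y ∈ peirceSet e₁ j i,
      (e₁ * (φ x * e₁) + (1 - e₁) * (φ x * (1 - e₁))) * y =
        y * (e₁ * (φ x * e₁) + (1 - e₁) * (φ x * (1 - e₁))) :=
  stmt15_general alt1 alt2 tor2 e₁ he φ hadd hcomm
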